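/- arXiv:1308.4838 — 3 statements merged into one kernel-verified Lean document; each statement's English description precedes it below -/
import Mathlib

section
/- Let a₁, a₂, a₃ be real numbers and let Q be the 3×3 circulant matrix with rows (a₁,a₂,a₃), (a₃,a₁,a₂), (a₂,a₃,a₁). If Q³ = −E (E the 3×3 identity matrix) and Q ≠ −E, then (a₁,a₂,a₃) = (0,−1,0) or (a₁,a₂,a₃) = (0,0,−1); that is, Q is one of the two matrices with rows (0,−1,0),(0,0,−1),(−1,0,0) or (0,0,−1),(−1,0,0),(0,−1,0). -/
/-- If the 3×3 circulant matrix `Q` with first row `(a₁,a₂,a₃)` satisfies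
`Q³ = -E` and `Q ≠ -E`, then `(a₁,a₂,a₃) = (0,-1,0)` or `(a₁,a₂,a₃) = (0,0,-1)`. -/
theorem circulant_cube_eq_neg_one (a₁ a₂ a₃ : ℝ)
    (hcube : (!![a₁, a₂, a₃; a₃, a₁, a₂; a₂, a₃, a₁] : Matrix (Fin 3) (Fin 3) ℝ) ^ 3 = -1)
    (hne : (!![a₁, a₂, a₃; a₃, a₁, a₂; a₂, a₃, a₁] : Matrix (Fin 3) (Fin 3) ℝ) ≠ -1) :
    (a₁ = 0 ∧ a₂ = -1 ∧ a₃ = 0) ∨ (a₁ = 0 ∧ a₂ = 0 ∧ a₃ = -1) := by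
  have h00 := congrFun (congrFun hcube 0) 0
  have h01 := congrFun (congrFun hcube 0) 1
  have h02 := congrFun (congrFun hcube 0) 2
  simp [pow_succ, Matrix.mul_apply, Fin.sum_univ_three, Matrix.one_apply] at h00 h01 h02
  -- sum of entries: (a₁+a₂+a₃)³ = -1, hence a₁+a₂+a₃ = -1
  have hs3 : (a₁ + a₂ + a₃) ^ 3 = -1 := by linear_combination h00 + h01 + h02
  have hs : a₁ + a₂ + a₃ = -1 := by
    have hfac : (a₁ + a₂ + a₃ + 1) * ((a₁ + a₂ + a₃ - 1) ^ 2 + (a₁ + a₂ + a₃) ^ 2 + 1) = 0 := by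
      linear_combination 2 * hs3
    have hpos : (a₁ + a₂ + a₃ - 1) ^ 2 + (a₁ + a₂ + a₃) ^ 2 + 1 > 0 := by positivity
    have := (mul_eq_zero.mp hfac).resolve_right (ne_of_gt hpos)
    linarith
  -- "real part" equation: y³ - 9 y β² = -8, with y = 2a₁ - a₂ - a₃, β = a₂ - a₃
  have hRe : (2*a₁ - a₂ - a₃) ^ 3 - 9 * (2*a₁ - a₂ - a₃) * (a₂ - a₃) ^ 2 = -8 := by
    linear_combination 8 * h00 - 4 * h01 - 4 * h02
  -- "imaginary part" equation: β (y² - β²) = 0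
  have hIm : (a₂ - a₃) * ((2*a₁ - a₂ - a₃) ^ 2 - (a₂ - a₃) ^ 2) = 0 := by
    linear_combination (4/3) * h01 - (4/3) * h02
  rcases mul_eq_zero.mp hIm with hb | hq
  · -- a₂ = a₃ : forces Q = -1, contradiction
    have h3 : (2*a₁ - a₂ - a₃) ^ 3 = -8 := by
      linear_combination hRe + 9 * (2*a₁ - a₂ - a₃) * (a₂ - a₃) * hb
    have hy : 2*a₁ - a₂ - a₃ = -2 := by
      have hfac : (2*a₁ - a₂ - a₃ + 2) *
          ((2*a₁ - a₂ - a₃ - 1) ^ 2 + 3) = 0 := by linear_combination h3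
      have hpos : (2*a₁ - a₂ - a₃ - 1) ^ 2 + 3 > 0 := by positivity
      have := (mul_eq_zero.mp hfac).resolve_right (ne_of_gt hpos)
      linarith
    have ha₁ : a₁ = -1 := by linarith
    have ha₂ : a₂ = 0 := by linarith
    have ha₃ : a₃ = 0 := by linarith
    exfalso
    apply hne
    subst ha₁ ha₂ ha₃
    ext i j
    fin_cases i <;> fin_cases j <;> simp [Matrix.one_fin_three, Matrix.vecHead, Matrix.vecTail]
  · -- y² = β² : then y³ = 1, y = 1
    have h8 : (2*a₁ - a₂ - a₃) ^ 3 = 1 := by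
      have : (2*a₁ - a₂ - a₃) ^ 3 - 9 * (2*a₁ - a₂ - a₃) * (2*a₁ - a₂ - a₃) ^ 2 = -8 := by
        linear_combination hRe - 9 * (2*a₁ - a₂ - a₃) * hq
      linarith [this]
    have hy : 2*a₁ - a₂ - a₃ = 1 := by
      have hfac : (2*a₁ - a₂ - a₃ - 1) *
          ((2*(2*a₁ - a₂ - a₃) + 1) ^ 2 + 3) = 0 := by linear_combination 4 * h8
      have hpos : (2*(2*a₁ - a₂ - a₃) + 1) ^ 2 + 3 > 0 := by positivity
      have := (mul_eq_zero.mp hfac).resolve_right (ne_of_gt hpos)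
      linarith
    have ha₁ : a₁ = 0 := by linarith
    have hb2 : (a₂ - a₃ - 1) * (a₂ - a₃ + 1) = 0 := by
      linear_combination -hq + (2*a₁ - a₂ - a₃ + 1) * hy
    have h23 : a₂ + a₃ = -1 := by linarith
    rcases mul_eq_zero.mp hb2 with h | h
    · right; exact ⟨ha₁, by linarith, by linarith⟩
    · left; exact ⟨ha₁, by linarith, by linarith⟩
end

section
/- Suppose x = (x¹,x²,x³) ∈ ℝ³ induces a q-basis (i.e. 3x¹x²x³ ≠ (x¹)³+(x²)³+(x³)³). With a = (x¹)²+(x²)²+(x³)² and b = x¹x²+x¹x³+x²x³, the vectors x, qx, q²x are pairwise orthogonal with respect to g if and only if Ba + (A+B)b = 0. -/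
/-- The metric `g` determined by the circulant matrix with rows `(A,B,B),(B,A,B),(B,B,A)`. -/
def g (A B : ℝ) (x y : Fin 3 → ℝ) : ℝ :=
  A * (x 0 * y 0 + x 1 * y 1 + x 2 * y 2) +
    B * (x 0 * y 1 + x 0 * y 2 + x 1 * y 0 + x 1 * y 2 + x 2 * y 0 + x 2 * y 1)

/-- The structure `q`, given by `q(x¹,x²,x³) = (-x²,-x³,-x¹)`. -/
def q (x : Fin 3 → ℝ) : Fin 3 → ℝ := ![-(x 1), -(x 2), -(x 0)]

/-- if `x` induces a `q`-basis, then `x, qx, q²x` are pairwise `g`-orthogonal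
iff `Ba + (A+B)b = 0`, where `a = (x¹)²+(x²)²+(x³)²` and `b = x¹x²+x¹x³+x²x³`. -/
theorem orthogonal_q_basis_iff (A B : ℝ) (hAB : A > B) (hB : B > 0) (x : Fin 3 → ℝ)
    (hx : 3 * x 0 * x 1 * x 2 ≠ (x 0) ^ 3 + (x 1) ^ 3 + (x 2) ^ 3) :
    (g A B x (q x) = 0 ∧ g A B x (q (q x)) = 0 ∧ g A B (q x) (q (q x)) = 0) ↔
      B * ((x 0) ^ 2 + (x 1) ^ 2 + (x 2) ^ 2) +
        (A + B) * (x 0 * x 1 + x 0 * x 2 + x 1 * x 2) = 0 := by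
  simp only [g, q, Matrix.cons_val_zero, Matrix.cons_val_one, Matrix.head_cons,
    Matrix.cons_val_two, Matrix.tail_cons]
  constructor
  · rintro ⟨h, -, -⟩; nlinarith [h]
  · intro h; refine ⟨by nlinarith [h], by nlinarith [h], by nlinarith [h]⟩
end

section
/- Let A, B be real numbers with A > B > 0 and let x = (0, −(A+B) + √((A−B)(A+3B)), 2B) ∈ ℝ³. Then x induces a q-basis of ℝ³ (the vectors x, qx, q²x are linearly independent) and this q-basis is orthogonal with respect to g (the vectors x, qx, q²x are pairwise g-orthogonal). -/
/-! The orthogonality of a `q`-orbit reduces to the single equation `g x (q x) = 0`: `g` is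
circulant, so it is invariant under the cyclic shift `-q`, and `q³ = -1`. For `A > B ≥ 0` the form
`g = (A - B)·|x|² + B·(x¹ + x² + x³)²` on the diagonal is positive definite, so a `g`-orthogonal
orbit of a nonzero vector is linearly independent. For `x = (0, t, 2B)` the equation
`g x (q x) = 0` reads `t² + 2(A + B) t + 4B² = 0`, and `(A + B)² - 4B² = (A - B)(A + 3B)`. -/

open LinearMap (BilinForm)

section Circulant

variable {A B : ℝ}

theorem q_q_q (x : Fin 3 → ℝ) : q (q (q x)) = -x := by
  funext i
  fin_cases i <;> simp [q]

theorem q_ne_zero {x : Fin 3 → ℝ} (hx : x ≠ 0) : q x ≠ 0 := by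
  contrapose! hx
  rw [← neg_eq_zero, ← q_q_q, hx]
  funext i
  fin_cases i <;> simp [q]

theorem g_comm (x y : Fin 3 → ℝ) : g A B x y = g A B y x := by
  unfold g
  ring

theorem g_neg_right (x y : Fin 3 → ℝ) : g A B x (-y) = -g A B x y := by
  simp only [g, Pi.neg_apply]
  ring

theorem g_q_q (x y : Fin 3 → ℝ) : g A B (q x) (q y) = g A B x y := by
  simp only [g, q, Matrix.cons_val_zero, Matrix.cons_val_one, Matrix.cons_val_two,
    Matrix.head_cons, Matrix.tail_cons]
  ring

theorem g_q_q_right_self (x : Fin 3 → ℝ) : g A B x (q (q x)) = -g A B x (q x) :=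
  calc g A B x (q (q x)) = g A B (q x) (q (q (q x))) := (g_q_q x _).symm
    _ = -g A B x (q x) := by rw [q_q_q, g_neg_right, g_comm]

theorem g_q_right_self (x : Fin 3 → ℝ) :
    g A B x (q x) = -(B * (x 0 ^ 2 + x 1 ^ 2 + x 2 ^ 2)
      + (A + B) * (x 0 * x 1 + x 1 * x 2 + x 2 * x 0)) := by
  simp only [g, q, Matrix.cons_val_zero, Matrix.cons_val_one, Matrix.cons_val_two,
    Matrix.head_cons, Matrix.tail_cons]
  ring

theorem g_self (x : Fin 3 → ℝ) : g A B x x = (A - B) * (x ⬝ᵥ x) + B * (∑ i, x i) ^ 2 := by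
  simp only [g, dotProduct, Fin.sum_univ_three]
  ring

theorem g_self_pos (hAB : B < A) (hB : 0 ≤ B) {x : Fin 3 → ℝ} (hx : x ≠ 0) : 0 < g A B x x := by
  have hxx : 0 < x ⬝ᵥ x :=
    lt_of_le_of_ne (Finset.sum_nonneg fun i _ => mul_self_nonneg (x i))
      (Ne.symm (dotProduct_self_eq_zero.not.2 hx))
  rw [g_self]
  exact add_pos_of_pos_of_nonneg (mul_pos (sub_pos.2 hAB) hxx) (by positivity)

variable (A B) in
def gForm : BilinForm ℝ (Fin 3 → ℝ) :=
  LinearMap.mk₂ ℝ (g A B)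
    (fun x y z => by simp only [g, Pi.add_apply]; ring)
    (fun c x y => by simp only [g, Pi.smul_apply, smul_eq_mul]; ring)
    (fun x y z => by simp only [g, Pi.add_apply]; ring)
    (fun c x y => by simp only [g, Pi.smul_apply, smul_eq_mul]; ring)

@[simp]
theorem gForm_apply (x y : Fin 3 → ℝ) : gForm A B x y = g A B x y := rfl

theorem iIsOrtho_q_orbit {x : Fin 3 → ℝ} (h : g A B x (q x) = 0) :
    (gForm A B).iIsOrtho ![x, q x, q (q x)] := by
  have h₁ : g A B x (q (q x)) = 0 := by rw [g_q_q_right_self, h, neg_zero]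
  have h₂ : g A B (q x) (q (q x)) = 0 := by rw [g_q_q, h]
  rw [BilinForm.iIsOrtho_def]
  intro i j hij
  fin_cases i <;> fin_cases j <;>
    simp_all [g_comm (q x) x, g_comm (q (q x)) x, g_comm (q (q x)) (q x)]

theorem linearIndependent_q_orbit (hAB : B < A) (hB : 0 ≤ B) {x : Fin 3 → ℝ} (hx : x ≠ 0)
    (h : g A B x (q x) = 0) : LinearIndependent ℝ ![x, q x, q (q x)] := by
  have hne : ∀ i, ![x, q x, q (q x)] i ≠ 0 := by
    intro i
    fin_cases i
    exacts [hx, q_ne_zero hx, q_ne_zero (q_ne_zero hx)]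
  exact BilinForm.linearIndependent_of_iIsOrtho (iIsOrtho_q_orbit h)
    fun i => (g_self_pos hAB hB (hne i)).ne'

end Circulant

/-- for `A > B > 0`, the vector
`x = (0, -(A+B) + √((A-B)(A+3B)), 2B)` induces a `q`-basis of `ℝ³` which is orthogonal
with respect to `g`. -/
theorem example_orthogonal_q_basis (A B : ℝ) (hAB : A > B) (hB : B > 0) :
    let x : Fin 3 → ℝ := ![0, -(A + B) + Real.sqrt ((A - B) * (A + 3 * B)), 2 * B]
    LinearIndependent ℝ ![x, q x, q (q x)] ∧
      g A B x (q x) = 0 ∧ g A B x (q (q x)) = 0 ∧ g A B (q x) (q (q x)) = 0 := by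
  intro x
  have hx : x ≠ 0 := fun h => by simpa [x, hB.ne'] using congrFun h 2
  have hs : Real.sqrt ((A - B) * (A + 3 * B)) ^ 2 = (A - B) * (A + 3 * B) :=
    Real.sq_sqrt (by nlinarith)
  have horth : g A B x (q x) = 0 := by
    rw [g_q_right_self]
    simp only [x, Matrix.cons_val_zero, Matrix.cons_val_one, Matrix.cons_val_two,
      Matrix.head_cons, Matrix.tail_cons]
    linear_combination (-B) * hs
  exact ⟨linearIndependent_q_orbit hAB hB.le hx horth, horth,
    by rw [g_q_q_right_self, horth, neg_zero], by rw [g_q_q, horth]⟩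
end
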